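/- arXiv:math-ph/0501014 — 3 statements merged into one kernel-verified Lean document; each statement's English description precedes it below -/
import Mathlib

section
/- Let π : G̃ → G be a covering homomorphism of groups with central kernel Π. Define G̃^(E) = { g̃ ∈ G̃^E : ∀e, π(g̃(e)) = π(g̃(e⁻¹))⁻¹ } where E carries a fixed-point-free involution e ↦ e⁻¹. Then the map o : G̃^(E) → Π defined by o(g̃) = ∏_{e∈E⁺} g̃(e) g̃(e⁻¹) (for any orientation E⁺) is well-defined, i.e., takes values in Π and is independent of the orientation. -/
/-!
All factors `g̃(e) g̃(e⁻¹)` lie in `Π`, which is central, so the product over `E⁺` does not depend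
on the order of the factors. Moreover `g̃(e⁻¹) g̃(e)` is the conjugate of the central element
`g̃(e) g̃(e⁻¹)` by `g̃(e)⁻¹`, so the factors attached to `e` and to `e⁻¹` coincide. Any two
orientations are matched by the bijection that fixes their common edges and reverses the others,
and this bijection preserves the factors.
-/

theorem mul_comm_of_mul_mem_center {G : Type*} [Group G] {a b : G}
    (h : a * b ∈ Submonoid.center G) : b * a = a * b :=
  mul_left_cancel <| by rw [← mul_assoc, ← Submonoid.mem_center_iff.mp h a]

section Orientation

variable {E M : Type*} {α : E → E}

theorem Finset.prod_eq_prod_of_orientation [CommMonoid M] (hα : Function.Involutive α)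
    {f : E → M} (hf : ∀ e, f (α e) = f e) {s t : Finset E}
    (hs : ∀ e, e ∈ s ↔ α e ∉ s) (ht : ∀ e, e ∈ t ↔ α e ∉ t) :
    ∏ e ∈ s, f e = ∏ e ∈ t, f e := by
  classical
  let reorient (u : Finset E) (e : E) : E := if e ∈ u then e else α e
  have reorient_mem {u : Finset E} (hu : ∀ e, e ∈ u ↔ α e ∉ u) (e : E) : reorient u e ∈ u := by
    by_cases he : e ∈ u
    · simp [reorient, he]
    · simpa [reorient, he] using mt (hu e).mpr he
  have reorient_reorient {u : Finset E} (hu : ∀ e, e ∈ u ↔ α e ∉ u) (v : Finset E) {e : E}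
      (he : e ∈ u) : reorient u (reorient v e) = e := by
    by_cases hev : e ∈ v
    · simp [reorient, hev, he]
    · simp [reorient, hev, (hu e).mp he, hα e]
  have f_reorient (u : Finset E) (e : E) : f (reorient u e) = f e := by
    by_cases he : e ∈ u <;> simp [reorient, he, hf]
  exact Finset.prod_nbij' (reorient t) (reorient s) (fun e _ => reorient_mem ht e)
    (fun e _ => reorient_mem hs e) (fun _ => reorient_reorient hs t)
    (fun _ => reorient_reorient ht s) (fun e _ => (f_reorient t e).symm)

theorem List.prod_map_eq_of_orientation [CommMonoid M] (hα : Function.Involutive α)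
    {f : E → M} (hf : ∀ e, f (α e) = f e) {l₁ l₂ : List E}
    (h₁ : l₁.Nodup) (hl₁ : ∀ e, e ∈ l₁ ↔ α e ∉ l₁) (h₂ : l₂.Nodup) (hl₂ : ∀ e, e ∈ l₂ ↔ α e ∉ l₂) :
    (l₁.map f).prod = (l₂.map f).prod := by
  classical
  rw [← List.prod_toFinset f h₁, ← List.prod_toFinset f h₂]
  exact Finset.prod_eq_prod_of_orientation hα hf (by simpa using hl₁) (by simpa using hl₂)

theorem List.prod_map_eq_of_orientation_of_mem_center [Monoid M] (hα : Function.Involutive α)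
    {f : E → M} (hfc : ∀ e, f e ∈ Submonoid.center M) (hf : ∀ e, f (α e) = f e) {l₁ l₂ : List E}
    (h₁ : l₁.Nodup) (hl₁ : ∀ e, e ∈ l₁ ↔ α e ∉ l₁) (h₂ : l₂.Nodup) (hl₂ : ∀ e, e ∈ l₂ ↔ α e ∉ l₂) :
    (l₁.map f).prod = (l₂.map f).prod := by
  let c (e : E) : Submonoid.center M := ⟨f e, hfc e⟩
  have coe_prod (l : List E) : (l.map f).prod = ((l.map c).prod : M) := by
    rw [Submonoid.coe_list_prod, List.map_map]
    rfl
  rw [coe_prod, coe_prod,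
    List.prod_map_eq_of_orientation hα (fun e => Subtype.ext (hf e)) h₁ hl₁ h₂ hl₂]

end Orientation

theorem stmt_5_general {Gt G E : Type*} [Group Gt] [Group G]
    (π : Gt →* G)
    (hcentral : π.ker ≤ Subgroup.center Gt)
    (α : E → E) (hinv : Function.Involutive α)
    (g : E → Gt) (hg : ∀ e, π (g e) = (π (g (α e)))⁻¹) :
    ∃ z : Gt, z ∈ π.ker ∧
      ∀ l : List E, l.Nodup → (∀ e, e ∈ l ↔ α e ∉ l) →
        (l.map (fun e => g e * g (α e))).prod = z := by
  have hker (e : E) : g e * g (α e) ∈ π.ker := by simp [MonoidHom.mem_ker, hg e]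
  have hcenter (e : E) : g e * g (α e) ∈ Submonoid.center Gt := hcentral (hker e)
  have hflip (e : E) : g (α e) * g (α (α e)) = g e * g (α e) := by
    rw [hinv e, mul_comm_of_mul_mem_center (hcenter e)]
  by_cases hE : ∃ l : List E, l.Nodup ∧ ∀ e, e ∈ l ↔ α e ∉ l
  · obtain ⟨l₀, h₀, hl₀⟩ := hE
    refine ⟨(l₀.map fun e => g e * g (α e)).prod,
      π.ker.list_prod_mem (List.forall_mem_map.mpr fun e _ => hker e), fun l h hl => ?_⟩
    exact List.prod_map_eq_of_orientation_of_mem_center hinv hcenter hflip h hl h₀ hl₀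
  · exact ⟨1, π.ker.one_mem, fun l h hl => absurd ⟨l, h, hl⟩ hE⟩

/-- the obstruction map `o : G̃^(E) → Π` is well defined: for a
configuration `g̃ ∈ G̃^(E)` (i.e. `π(g̃ e) = π(g̃ (α e))⁻¹` for all `e`), there is a
single element `z` of the central kernel `Π = ker π` equal to the product
`∏_{e ∈ E⁺} g̃(e) g̃(α e)` for every orientation `E⁺` (enumerated by any list `l`
without duplicates containing exactly one edge of each pair `{e, α e}`, in any
order). -/
theorem stmt_5 {Gt G E : Type*} [Group Gt] [Group G] [Fintype E] [DecidableEq E]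
    (π : Gt →* G) (hsurj : Function.Surjective π)
    (hcentral : π.ker ≤ Subgroup.center Gt)
    (α : E → E) (hinv : Function.Involutive α) (hfp : ∀ e, α e ≠ e)
    (g : E → Gt) (hg : ∀ e, π (g e) = (π (g (α e)))⁻¹) :
    ∃ z : Gt, z ∈ π.ker ∧
      ∀ l : List E, l.Nodup → (∀ e, e ∈ l ↔ α e ∉ l) →
        (l.map (fun e => g e * g (α e))).prod = z :=
  stmt_5_general π hcentral α hinv g hg
end

section
/- With notation as in the definition of the obstruction map: the map o : G̃^(E) → Π is invariant under the gauge group action, i.e., for j = ((j_v)_{v∈V}, (z_e)_{e∈E}) with (z_e) in the kernel J_Π of the face-product map, and (j·g̃)(e) = j_{t(e)}⁻¹ g̃(e) j_{s(e)} z_e, one has o(j·g̃) = o(g̃). -/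
/-!
On each pair `{e, α e}` the vertex gauges cancel, since `t (α e) = s e` and `g e * g (α e)` lies in
`ker π`, hence is central; so the pair contributes `(z e * z (α e)) * (g e * g (α e))`. Pulling the
central factors out of the product leaves the product of `z` over `l ++ l.map α`, which
enumerates `E` once and therefore has product `1`.
-/

theorem List.prod_map_mul_of_commute {ι M : Type*} [Monoid M] (l : List ι) (f g : ι → M)
    (hf : ∀ i ∈ l, ∀ x, Commute (f i) x) :
    (l.map fun i => f i * g i).prod = (l.map f).prod * (l.map g).prod := by
  induction l with
  | nil => simp
  | cons a l ih =>
    have hcomm : Commute (g a) (l.map f).prod :=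
      (Commute.list_prod_left _ _ fun x hx => by
        obtain ⟨i, hi, rfl⟩ := List.mem_map.mp hx
        exact hf i (List.mem_cons_of_mem a hi) (g a)).symm
    simp only [List.map_cons, List.prod_cons, ih fun i hi => hf i (List.mem_cons_of_mem a hi),
      ← mul_assoc, hcomm.mul_mul_mul_comm]

theorem mul_conj_mul_of_mem_center {G : Type*} [Group G] {a b x y u v : G}
    (hu : u ∈ Subgroup.center G) (hv : v ∈ Subgroup.center G) (hxy : x * y ∈ Subgroup.center G) :
    (a⁻¹ * x * b * u) * (b⁻¹ * y * a * v) = (u * v) * (x * y) := by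
  rw [Subgroup.mem_center_iff] at hu hv hxy
  calc (a⁻¹ * x * b * u) * (b⁻¹ * y * a * v) = a⁻¹ * (x * y) * a * (v * u) := by
        rw [mul_assoc _ u, ← hu]; group
    _ = (u * v) * (x * y) := by rw [hxy, inv_mul_cancel_right, ← hxy, hv u]

section Orientation

variable {E : Type*} {α : E → E} {l : List E}

theorem List.nodup_append_map_of_mem_iff_not_mem (hα : Function.Involutive α) (hl : l.Nodup)
    (hor : ∀ e, e ∈ l ↔ α e ∉ l) : (l ++ l.map α).Nodup := by
  refine List.nodup_append'.mpr ⟨hl, hl.map hα.injective, fun e he he' => ?_⟩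
  obtain ⟨e', he', rfl⟩ := List.mem_map.mp he'
  exact (hor (α e')).mp he (by rwa [hα e'])

theorem List.mem_append_map_of_mem_iff_not_mem (hα : Function.Involutive α)
    (hor : ∀ e, e ∈ l ↔ α e ∉ l) (e : E) : e ∈ l ++ l.map α := by
  by_cases he : e ∈ l
  · exact List.mem_append_left _ he
  · have hαe : α e ∈ l := of_not_not fun h => he ((hor e).mpr h)
    exact List.mem_append_right _ (List.mem_map.mpr ⟨α e, hαe, hα e⟩)

end Orientation

theorem stmt_6_general {Gt G V E : Type*} [Group Gt] [Group G]
    (π : Gt →* G) (hcentral : π.ker ≤ Subgroup.center Gt)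
    (α : E → E) (hinv : Function.Involutive α)
    (s t : E → V) (hst : ∀ e, s (α e) = t e)
    (g : E → Gt) (hg : ∀ e, π (g e) = (π (g (α e)))⁻¹)
    (j : V → Gt) (z : E → Gt) (hz : ∀ e, z e ∈ π.ker)
    (hztot : ∀ l : List E, l.Nodup → (∀ e, e ∈ l) → (l.map z).prod = 1)
    (l : List E) (hl : l.Nodup) (hor : ∀ e, e ∈ l ↔ α e ∉ l) :
    (l.map (fun e => ((j (t e))⁻¹ * g e * j (s e) * z e) *
        ((j (t (α e)))⁻¹ * g (α e) * j (s (α e)) * z (α e)))).prod =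
    (l.map (fun e => g e * g (α e))).prod := by
  have hzc : ∀ e, z e ∈ Subgroup.center Gt := fun e => hcentral (hz e)
  have hgc : ∀ e, g e * g (α e) ∈ Subgroup.center Gt := fun e =>
    hcentral (by rw [MonoidHom.mem_ker, map_mul, hg, inv_mul_cancel])
  have hts : ∀ e, t (α e) = s e := fun e => by rw [← hst, hinv]
  have hedge : ∀ e, ((j (t e))⁻¹ * g e * j (s e) * z e) *
      ((j (t (α e)))⁻¹ * g (α e) * j (s (α e)) * z (α e)) = (z e * z (α e)) * (g e * g (α e)) :=
    fun e => by rw [hst, hts]; exact mul_conj_mul_of_mem_center (hzc e) (hzc (α e)) (hgc e)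
  have hcomm : ∀ c ∈ Subgroup.center Gt, ∀ x, Commute c x := fun c hc x =>
    (Subgroup.mem_center_iff.mp hc x).symm
  have hzpairs : (l.map fun e => z e * z (α e)).prod = 1 := by
    have htot := hztot _ (List.nodup_append_map_of_mem_iff_not_mem hinv hl hor)
      (List.mem_append_map_of_mem_iff_not_mem hinv hor)
    rw [List.map_append, List.prod_append, List.map_map] at htot
    rw [List.prod_map_mul_of_commute _ _ _ fun e _ => hcomm _ (hzc e)]
    exact htot
  simp only [hedge]
  rw [List.prod_map_mul_of_commute _ _ _ fun e _ => hcomm _ (mul_mem (hzc e) (hzc (α e))),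
    hzpairs, one_mul]

/-- invariance of the obstruction map under the discrete gauge group.
For a gauge transformation `j = ((j_v), (z_e))` with `(z_e)` valued in the central
kernel `Π = ker π` and total product `∏_{e ∈ E} z_e = 1` (as holds for elements of
`J_Π`), the transformed configuration `(j·g̃)(e) = j_{t e}⁻¹ g̃(e) j_{s e} z_e` has
the same obstruction as `g̃`: for every orientation `E⁺` (enumerated by a list `l`),
`∏_{e ∈ E⁺} (j·g̃)(e) (j·g̃)(α e) = ∏_{e ∈ E⁺} g̃(e) g̃(α e)`. -/
theorem stmt_6 {Gt G V E : Type*} [Group Gt] [Group G] [Fintype E] [DecidableEq E]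
    (π : Gt →* G) (hcentral : π.ker ≤ Subgroup.center Gt)
    (α : E → E) (hinv : Function.Involutive α) (hfp : ∀ e, α e ≠ e)
    (s t : E → V) (hst : ∀ e, s (α e) = t e)
    (g : E → Gt) (hg : ∀ e, π (g e) = (π (g (α e)))⁻¹)
    (j : V → Gt) (z : E → Gt) (hz : ∀ e, z e ∈ π.ker)
    (hztot : ∀ l : List E, l.Nodup → (∀ e, e ∈ l) → (l.map z).prod = 1)
    (l : List E) (hl : l.Nodup) (hor : ∀ e, e ∈ l ↔ α e ∉ l) :
    (l.map (fun e => ((j (t e))⁻¹ * g e * j (s e) * z e) *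
        ((j (t (α e)))⁻¹ * g (α e) * j (s (α e)) * z (α e)))).prod =
    (l.map (fun e => g e * g (α e))).prod :=
  stmt_6_general π hcentral α hinv s t hst g hg j z hz hztot l hl hor
end

section
/- Cut-and-paste preserves single-facedness: let Γ = (E; σ, α) be a fat graph whose face permutation φ = ασ⁻¹ is a single cycle containing all of E, and which has a single vertex (σ is a single cycle). For e ∈ E write φ = (e, e₁,…,e_r, d, α(e), e_{r+1},…,e_s) and set φ' = (e, d, e₁,…,e_r, α(e), e_{r+1},…,e_s), σ' = (φ')⁻¹α. Then the fat graph K_e(Γ) = (E; σ', α) also has a single face and a single vertex. -/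
/-!
Write `φ = α σ⁻¹`, `d = φ⁻¹ (α e)` and `p = φ⁻¹ d`. Then `φ' = φ (p d) (d e)` (also when
`p = e`, where the transpositions cancel) and `σ' = φ'⁻¹ α = (d e) (p d) σ`, which is conjugate
to `σ (e d) (d p)`. So both claims reduce to one fact about a cyclic permutation `π` with
`π a = b`: right multiplication by `(a b)` cuts `b` out of the cycle as a fixed point, and right
multiplication by `(b c)`, for any `c ≠ b`, splices it back in after `c`, leaving a single cycle.
-/

open Equiv Equiv.Perm Set

namespace Equiv.Perm

variable {α : Type*}

def IsFullCycle (f : Perm α) : Prop := ∀ x y, f.SameCycle x y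

theorem SameCycle.mem_of_mapsTo [Finite α] {f : Perm α} {s : Set α} {x y : α}
    (h : f.SameCycle x y) (hs : MapsTo f s s) (hx : x ∈ s) : y ∈ s := by
  obtain ⟨k, -, rfl⟩ := h.exists_pow_eq'
  exact hs.perm_pow k hx

theorem IsFullCycle.mem_of_mapsTo [Finite α] {f : Perm α} (hf : f.IsFullCycle) {s : Set α}
    (hs : MapsTo f s s) {x : α} (hx : x ∈ s) (y : α) : y ∈ s :=
  (hf x y).mem_of_mapsTo hs hx

theorem IsFullCycle.eq_of_apply_eq_self {f : Perm α} (hf : f.IsFullCycle) {x : α}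
    (hx : f x = x) (y : α) : x = y :=
  (hf x y).eq_of_left hx

theorem IsFullCycle.mul_comm {f g : Perm α} (h : (f * g).IsFullCycle) :
    (g * f).IsFullCycle := by
  intro x y
  have hconj : g * f = f⁻¹ * (f * g) * f⁻¹⁻¹ := by group
  rw [hconj, sameCycle_conj]
  exact h _ _

variable [DecidableEq α]

theorem IsFullCycle.sameCycle_mul_swap [Finite α] {π : Perm α} (hπ : π.IsFullCycle) {a b : α}
    (hab : π a = b) (hne : a ≠ b) {x : α} (hx : x ≠ b) : (π * swap a b).SameCycle a x := by
  have hfix : (π * swap a b) b = b := by simp [hab]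
  suffices x ∈ {b} ∪ {y | (π * swap a b).SameCycle a y} by
    simpa [hx] using this
  refine hπ.mem_of_mapsTo ?_ (Or.inr (SameCycle.refl _ _)) x
  rintro y (rfl | hy)
  · exact Or.inr ⟨1, by simp⟩
  · have hyb : y ≠ b := fun h => hne ((h ▸ hy).eq_of_right hfix)
    by_cases hya : y = a
    · exact Or.inl (hya ▸ hab)
    · refine Or.inr (hy.trans ⟨1, ?_⟩)
      simp [swap_apply_of_ne_of_ne hya hyb]

theorem isFullCycle_mul_swap_of_apply_eq_self [Finite α] {f : Perm α} {b c : α} (hb : f b = b)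
    (hc : ∀ x, x ≠ b → f.SameCycle c x) : (f * swap b c).IsFullCycle := by
  set g := f * swap b c
  have hgc : g c = b := by simp [g, hb]
  have hmaps : MapsTo f {y | g.SameCycle c y} {y | g.SameCycle c y} := by
    intro y hy
    by_cases hyb : y = b
    · subst hyb
      rwa [hb]
    by_cases hyc : y = c
    · subst hyc
      exact ⟨2, by simp [g, sq, hb]⟩
    · exact hy.trans ⟨1, by simp [g, swap_apply_of_ne_of_ne hyb hyc]⟩
  have hall : ∀ y, g.SameCycle c y := by
    intro y
    by_cases hyb : y = b
    · exact ⟨1, by simpa [hyb] using hgc⟩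
    · exact (hc y hyb).mem_of_mapsTo hmaps (SameCycle.refl _ _)
  exact fun x y => (hall x).symm.trans (hall y)

theorem IsFullCycle.mul_swap_mul_swap [Finite α] {π : Perm α} (hπ : π.IsFullCycle) {a b c : α}
    (hab : π a = b) (hne : a ≠ b) (hcb : c ≠ b) : (π * swap a b * swap b c).IsFullCycle :=
  isFullCycle_mul_swap_of_apply_eq_self (by simp [hab]) fun x hx =>
    (hπ.sameCycle_mul_swap hab hne hcb).symm.trans (hπ.sameCycle_mul_swap hab hne hx)

theorem mul_swap_mul_swap_apply (π : Perm α) {a b c : α} (hab : a ≠ b) (hac : a ≠ c)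
    (hbc : b ≠ c) (x : α) :
    (π * swap a b * swap b c) x =
      if x = c then π a else if x = a then π b else if x = b then π c else π x := by
  simp only [Perm.mul_apply, swap_apply_def]
  split_ifs <;> simp_all

end Equiv.Perm

theorem stmt_12_general {E : Type*} [Fintype E] [DecidableEq E]
    (σ α : Equiv.Perm E)
    (hface : ∀ x y : E, Equiv.Perm.SameCycle (σ.symm.trans α) x y)
    (hvertex : ∀ x y : E, σ.SameCycle x y)
    (e : E)
    (hnd : (σ.symm.trans α).symm (α e) ≠ e)
    (φ' : Equiv.Perm E)
    (hspec :
      if (σ.symm.trans α).symm ((σ.symm.trans α).symm (α e)) = e then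
        φ' = σ.symm.trans α
      else
        ∀ x : E, φ' x =
          if x = e then (σ.symm.trans α).symm (α e)
          else if x = (σ.symm.trans α).symm ((σ.symm.trans α).symm (α e)) then α e
          else if x = (σ.symm.trans α).symm (α e) then (σ.symm.trans α) e
          else (σ.symm.trans α) x) :
    (∀ x y : E, Equiv.Perm.SameCycle φ' x y) ∧
    (∀ x y : E, Equiv.Perm.SameCycle (α.trans φ'.symm) x y) := by
  set φ := σ.symm.trans α
  set d := φ.symm (α e)
  set p := φ.symm d
  have hφp : φ p = d := φ.apply_symm_apply d
  have hσe : σ e = d := by simp [d, φ]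
  have hpd : p ≠ d := fun h =>
    hnd (IsFullCycle.eq_of_apply_eq_self hface (show φ d = d by rwa [h] at hφp) e)
  have hφ' : φ' = φ * swap p d * swap d e := by
    split_ifs at hspec with hpe
    · rw [hspec, hpe, swap_comm, mul_assoc, swap_mul_self, mul_one]
    · ext x
      rw [hspec x, mul_swap_mul_swap_apply φ hpd hpe hnd, hφp, φ.apply_symm_apply]
  have hσ' : α.trans φ'.symm = (swap d e * swap p d) * σ :=
    calc α.trans φ'.symm = φ'⁻¹ * α := rfl
      _ = (α * σ⁻¹ * swap p d * swap d e)⁻¹ * α := by rw [hφ']; rfl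
      _ = (swap d e * swap p d) * σ := by
        simp only [mul_inv_rev, swap_inv, inv_inv, mul_assoc, inv_mul_cancel, mul_one]
  refine ⟨hφ' ▸ IsFullCycle.mul_swap_mul_swap hface hφp hpd hnd.symm, hσ' ▸ ?_⟩
  refine IsFullCycle.mul_comm ?_
  rw [swap_comm d e, swap_comm p d, ← mul_assoc]
  exact IsFullCycle.mul_swap_mul_swap hvertex hσe hnd.symm hpd

/-- the cut-and-paste operation `K_e` preserves the property of
having a single face and a single vertex.  Here `Γ = (E; σ, α)` is a fat graph
with face permutation `φ = α ∘ σ⁻¹` (a single cycle through all of `E`) and a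
single vertex (`σ` is a single cycle through all of `E`).  Writing
`d = φ⁻¹(α e)` and `p = φ⁻¹(d)`, the new face permutation `φ'` sends `e ↦ d`,
`p ↦ α e`, `d ↦ φ e` and agrees with `φ` elsewhere (it is `φ` itself in the
degenerate case `p = e`), and the new vertex permutation is `σ' = φ'⁻¹ ∘ α`. -/
theorem stmt_12 {E : Type*} [Fintype E] [DecidableEq E]
    (σ α : Equiv.Perm E) (hinv : ∀ x, α (α x) = x) (hfp : ∀ x, α x ≠ x)
    (hface : ∀ x y : E, Equiv.Perm.SameCycle (σ.symm.trans α) x y)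
    (hvertex : ∀ x y : E, σ.SameCycle x y)
    (e : E)
    (hnd : (σ.symm.trans α).symm (α e) ≠ e)
    (φ' : Equiv.Perm E)
    (hspec :
      if (σ.symm.trans α).symm ((σ.symm.trans α).symm (α e)) = e then
        φ' = σ.symm.trans α
      else
        ∀ x : E, φ' x =
          if x = e then (σ.symm.trans α).symm (α e)
          else if x = (σ.symm.trans α).symm ((σ.symm.trans α).symm (α e)) then α e
          else if x = (σ.symm.trans α).symm (α e) then (σ.symm.trans α) e
          else (σ.symm.trans α) x) :
    (∀ x y : E, Equiv.Perm.SameCycle φ' x y) ∧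
    (∀ x y : E, Equiv.Perm.SameCycle (α.trans φ'.symm) x y) :=
  stmt_12_general σ α hface hvertex e hnd φ' hspec
end
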